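/- For every θ > 0 and every x ∈ ℝ, the truncation function satisfies −(1/θ)·log(1 − θx + θ²x²) ≤ sign(x)·min(|x|, 1/θ) ≤ (1/θ)·log(1 + θx + θ²x²). -/

import Mathlib

open MeasureTheory ProbabilityTheory Matrix Real
open scoped InnerProductSpace

noncomputable section

/-- Vectors in `ℝ^d` with the Euclidean norm. -/
abbrev Vec (d : ℕ) := EuclideanSpace ℝ (Fin d)

/-- Real `d × d` matrices. -/
abbrev Mat (d : ℕ) := Matrix (Fin d) (Fin d) ℝ

variable {d : ℕ}

/-- Operator (spectral) norm of a square matrix. -/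
noncomputable def opNorm (A : Mat d) : ℝ := ‖Matrix.toEuclideanCLM (𝕜 := ℝ) A‖

/-- Frobenius (Hilbert–Schmidt) norm. -/
noncomputable def frobNorm (A : Mat d) : ℝ := Real.sqrt (∑ i, ∑ j, (A i j) ^ 2)

/-- Nuclear norm `‖A‖₁ = tr √(AᵀA)`. -/
noncomputable def nuclearNorm (A : Mat d) : ℝ :=
  ((Matrix.posSemidef_conjTranspose_mul_self A).1.eigenvectorUnitary.1 *
    Matrix.diagonal ((RCLike.ofReal : ℝ → ℝ) ∘ (Real.sqrt ∘
      (Matrix.posSemidef_conjTranspose_mul_self A).1.eigenvalues)) *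
    (star (Matrix.posSemidef_conjTranspose_mul_self A).1.eigenvectorUnitary : Mat d)).trace

/-- Outer product `v vᵀ`. -/
def outer (v : Vec d) : Mat d := Matrix.of fun i j => v i * v j

/-- Entrywise expectation of a random matrix. -/
noncomputable def matExp {Ω : Type*} [MeasurableSpace Ω] (P : Measure Ω) (F : Ω → Mat d) : Mat d :=
  Matrix.of fun i j => ∫ ω, F ω i j ∂P

/-- The truncation function `ψ(x) = sign(x) · min(|x|, 1)`. -/
noncomputable def psi (x : ℝ) : ℝ := Real.sign x * min |x| 1

/-- Mean vector `μ₀ = 𝔼 X`. -/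
noncomputable def meanVec {Ω : Type*} [MeasurableSpace Ω] (P : Measure Ω) (X : Ω → Vec d) : Vec d :=
  ∫ ω, X ω ∂P

/-- Covariance matrix `Σ₀ = 𝔼[(X−μ₀)(X−μ₀)ᵀ]`. -/
noncomputable def covMat {Ω : Type*} [MeasurableSpace Ω] (P : Measure Ω) (X : Ω → Vec d) : Mat d :=
  matExp P (fun ω => outer (X ω - meanVec P X))

/-- `σ₀ = ‖𝔼[‖X−μ₀‖₂² (X−μ₀)(X−μ₀)ᵀ]‖^{1/2}`. -/
noncomputable def sigma0 {Ω : Type*} [MeasurableSpace Ω] (P : Measure Ω) (X : Ω → Vec d) : ℝ :=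
  Real.sqrt (opNorm (matExp P
    (fun ω => ‖X ω - meanVec P X‖ ^ 2 • outer (X ω - meanVec P X))))

/-- Intrinsic dimension `d̄ = σ₀²/‖Σ₀‖²`. -/
noncomputable def dbar {Ω : Type*} [MeasurableSpace Ω] (P : Measure Ω) (X : Ω → Vec d) : ℝ :=
  (sigma0 P X) ^ 2 / (opNorm (covMat P X)) ^ 2

/-- The truncated covariance estimator
`Σ̂(θ) = (mθ)⁻¹ ∑ᵢ ψ(θ‖Xᵢ−μ̂‖₂²) (Xᵢ−μ̂)(Xᵢ−μ̂)ᵀ/‖Xᵢ−μ̂‖₂²`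
(a summand being `0` when `Xᵢ = μ̂`, by the `0/0 = 0` convention). -/
noncomputable def truncCov {Ω : Type*} (m : ℕ) (X : Fin m → Ω → Vec d)
    (muhat : Ω → Vec d) (θ : ℝ) (ω : Ω) : Mat d :=
  (1 / (m * θ)) •
    ∑ i, (psi (θ * ‖X i ω - muhat ω‖ ^ 2) / ‖X i ω - muhat ω‖ ^ 2) • outer (X i ω - muhat ω)

/-- `μ̂` is a geometric median of the group means of the groups `G j` of the sample `X`:
it minimizes `z ↦ ∑ⱼ ‖z − μ̂ⱼ‖₂` where `μ̂ⱼ = |G j|⁻¹ ∑_{i ∈ G j} Xᵢ`. -/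
def IsMedianOfMeans {Ω : Type*} {m k : ℕ} (X : Fin m → Ω → Vec d)
    (G : Fin k → Finset (Fin m)) (muhat : Ω → Vec d) : Prop :=
  ∀ ω, ∀ z : Vec d,
    ∑ j, ‖muhat ω - ((G j).card : ℝ)⁻¹ • ∑ i ∈ G j, X i ω‖ ≤
      ∑ j, ‖z - ((G j).card : ℝ)⁻¹ • ∑ i ∈ G j, X i ω‖

/-- `θ_j = (1/σ_j)·√(β/m)` with `σ_j = σ_min 2^j`. -/
noncomputable def lepskiTheta (σmin β : ℝ) (m : ℕ) (j : ℤ) : ℝ :=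
  (1 / (σmin * 2 ^ j)) * Real.sqrt (β / m)

/-- The index set `𝒥 = {j ∈ ℤ : σ_min ≤ σ_min 2^j < 2 σ_max}`. -/
def lepskiJ (σmin σmax : ℝ) : Set ℤ :=
  {j : ℤ | σmin ≤ σmin * 2 ^ j ∧ σmin * 2 ^ j < 2 * σmax}

/-- `Σ̂_{m,j} = Σ̂(θ_j)`. -/
noncomputable def lepskiSig {Ω : Type*} (m : ℕ) (X : Fin m → Ω → Vec d) (muhat : Ω → Vec d)
    (σmin β : ℝ) (j : ℤ) (ω : Ω) : Mat d :=
  truncCov m X muhat (lepskiTheta σmin β m j) ω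

/-- `jstar ω` is the minimal `j ∈ 𝒥` such that for all `l ∈ 𝒥` with `l > j`,
`‖Σ̂_{m,l} − Σ̂_{m,j}‖ ≤ 6 σ_l √(β/m)`. -/
def IsLepskiIndex {Ω : Type*} {m : ℕ} (X : Fin m → Ω → Vec d) (muhat : Ω → Vec d)
    (σmin σmax β : ℝ) (jstar : Ω → ℤ) : Prop :=
  ∀ ω, jstar ω ∈ lepskiJ σmin σmax ∧
    (∀ l ∈ lepskiJ σmin σmax, jstar ω < l →
      opNorm (lepskiSig m X muhat σmin β l ω - lepskiSig m X muhat σmin β (jstar ω) ω) ≤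
        6 * (σmin * 2 ^ l) * Real.sqrt (β / m)) ∧
    (∀ j ∈ lepskiJ σmin σmax,
      (∀ l ∈ lepskiJ σmin σmax, j < l →
        opNorm (lepskiSig m X muhat σmin β l ω - lepskiSig m X muhat σmin β j ω) ≤
          6 * (σmin * 2 ^ l) * Real.sqrt (β / m)) →
      jstar ω ≤ j)

/-- Orthogonal projector onto the span of the (orthonormal eigen-)vectors `u 0, …, u (k-1)`. -/
noncomputable def projTop (k : ℕ) (u : Fin d → Fin d → ℝ) : Mat d :=
  ∑ i : Fin d, if (i : ℕ) < k then Matrix.of (fun a b => u i a * u i b) else (0 : Mat d)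

/-- Quadratic form `vᵀ M v`. -/
def quadForm (M : Mat d) (v : Vec d) : ℝ := ∑ i, ∑ j, v i * M i j * v j

/-- Matrix function `f(A) = U f(Λ) Uᵀ` defined through the spectral decomposition of a
Hermitian (real symmetric) matrix. -/
noncomputable def matApply (f : ℝ → ℝ) {A : Mat d} (hA : A.IsHermitian) : Mat d :=
  (hA.eigenvectorUnitary : Mat d) * Matrix.diagonal (f ∘ hA.eigenvalues) *
    star (hA.eigenvectorUnitary : Mat d)

end

/-!
For `|y| ≤ 1` the bound `ψ y ≤ log (1 + y + y²)` is `exp y ≤ 1 + y + y²`, the second-order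
Taylor bound of `exp` on `[-1, 1]`; for `|y| > 1` it is `exp (±1) ≤ 1 + y + y²`, which is crude.
The lower bound follows from the oddness of `ψ`, and the truncation at level `1/θ` is the
rescaling `(1/θ) ψ (θ x)`.
-/

lemma psi_neg (y : ℝ) : psi (-y) = -psi y := by
  simp only [psi, sign_neg, abs_neg, neg_mul]

lemma sign_mul_of_pos {θ : ℝ} (hθ : 0 < θ) (x : ℝ) : Real.sign (θ * x) = Real.sign x := by
  rcases lt_trichotomy x 0 with hx | rfl | hx
  · rw [sign_of_neg hx, sign_of_neg (mul_neg_of_pos_of_neg hθ hx)]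
  · simp
  · rw [sign_of_pos hx, sign_of_pos (mul_pos hθ hx)]

lemma sign_mul_min_inv_eq {θ : ℝ} (hθ : 0 < θ) (x : ℝ) :
    Real.sign x * min |x| (1 / θ) = (1 / θ) * psi (θ * x) := by
  have hmin : min |x| (1 / θ) = (1 / θ) * min |θ * x| 1 := by
    rw [abs_mul, abs_of_pos hθ, mul_min_of_nonneg _ _ (by positivity), one_div,
      inv_mul_cancel_left₀ hθ.ne', mul_one]
  rw [psi, sign_mul_of_pos hθ, hmin]
  ring

lemma psi_of_abs_le_one {y : ℝ} (hy : |y| ≤ 1) : psi y = y := by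
  rw [psi, min_eq_left hy]
  rcases lt_trichotomy y 0 with h | rfl | h
  · rw [sign_of_neg h, abs_of_neg h]; ring
  · simp
  · rw [sign_of_pos h, abs_of_pos h, one_mul]

lemma psi_of_one_lt_abs {y : ℝ} (hy : 1 < |y|) : psi y = Real.sign y := by
  rw [psi, min_eq_right hy.le, mul_one]

lemma exp_psi_le (y : ℝ) : exp (psi y) ≤ 1 + y + y ^ 2 := by
  rcases le_or_gt |y| 1 with hy | hy
  · rw [psi_of_abs_le_one hy]
    linarith [(abs_le.mp (abs_exp_sub_one_sub_id_le hy)).2]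
  · rw [psi_of_one_lt_abs hy]
    rcases lt_or_gt_of_ne (show y ≠ 0 by rintro rfl; norm_num at hy) with h | h
    · rw [abs_of_neg h] at hy
      have : exp (-1) < 1 := exp_lt_one_iff.mpr (by norm_num)
      rw [sign_of_neg h]
      nlinarith
    · rw [abs_of_pos h] at hy
      rw [sign_of_pos h]
      nlinarith [exp_one_lt_three]

lemma psi_le_log_one_add_add_sq (y : ℝ) : psi y ≤ log (1 + y + y ^ 2) := by
  have hpos : 0 < 1 + y + y ^ 2 := by nlinarith [sq_nonneg (y + 1 / 2)]
  exact (le_log_iff_exp_le hpos).mpr (exp_psi_le y)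

lemma neg_log_one_sub_add_sq_le_psi (y : ℝ) : -log (1 - y + y ^ 2) ≤ psi y := by
  have := psi_le_log_one_add_add_sq (-y)
  rw [psi_neg, neg_sq, ← sub_eq_add_neg] at this
  linarith

/-- the truncation function is sandwiched between two logarithms. -/
theorem stmt13 (θ x : ℝ) (hθ : 0 < θ) :
    -(1 / θ) * Real.log (1 - θ * x + θ ^ 2 * x ^ 2) ≤ Real.sign x * min |x| (1 / θ) ∧
      Real.sign x * min |x| (1 / θ) ≤ (1 / θ) * Real.log (1 + θ * x + θ ^ 2 * x ^ 2) := by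
  have hθinv : 0 ≤ 1 / θ := by positivity
  rw [sign_mul_min_inv_eq hθ, ← mul_pow]
  constructor
  · rw [neg_mul, ← mul_neg]
    exact mul_le_mul_of_nonneg_left (neg_log_one_sub_add_sq_le_psi _) hθinv
  · exact mul_le_mul_of_nonneg_left (psi_le_log_one_add_add_sq _) hθinv
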